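/- (First finite difference of total working-set size) For every trace of length n with m distinct data items, define W(x) = Σ_{t=x}^{n} ω(t,x) for 1 ≤ x ≤ n and W(0) = 0. Then for every x with 0 ≤ x ≤ n−1, W(x+1) − W(x) = m + Σ_{i=x+1}^{n−1} rt(i) − |{e ∈ M : f_e ≤ x}| − |{e ∈ M : l_e ≥ n−x+1}|. -/
import Mathlib


open Finset

/-- The data set of a trace `a` of length `n` (indices 1..n). -/
def dataSet (a : ℕ → ℕ) (n : ℕ) : Finset ℕ := (Finset.Icc 1 n).image a

/-- A trace is address-independent: data items are numbered in order of first appearance. -/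
def isAI (a : ℕ → ℕ) (n : ℕ) : Prop :=
  ∀ t ∈ Finset.Icc 1 n, 1 ≤ a t ∧ a t ≤ 1 + ((Finset.Ico 1 t).image a).card

/-- Indices `s < t` (with `s ≥ 1`) accessing the same datum as `t`. -/
def prevSet (a : ℕ → ℕ) (t : ℕ) : Finset ℕ :=
  (Finset.Ico 1 t).filter (fun s => a s = a t)

/-- Reuse time of access `t`: `t - s*` where `s*` is the previous access to the same
datum, or `⊤` for a first access. -/
def reuseTime (a : ℕ → ℕ) (t : ℕ) : ℕ∞ :=
  if h : (prevSet a t).Nonempty then ((t - (prevSet a t).max' h : ℕ) : ℕ∞) else ⊤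

/-- Reuse distance of access `t`: the number of distinct data accessed in
`a(s*+1), …, a(t)` where `s*` is the previous access to the same datum,
or `⊤` for a first access. -/
def reuseDist (a : ℕ → ℕ) (t : ℕ) : ℕ∞ :=
  if h : (prevSet a t).Nonempty then
    ((((Finset.Icc ((prevSet a t).max' h + 1) t).image a).card : ℕ) : ℕ∞)
  else ⊤

/-- Reuse-time histogram: number of accesses whose reuse time equals `i`. -/
def rtHist (a : ℕ → ℕ) (n i : ℕ) : ℕ :=
  ((Finset.Icc 1 n).filter (fun t => reuseTime a t = (i : ℕ∞))).card

/-- Reuse-distance histogram: number of accesses whose reuse distance equals `v`. -/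
def rdHist (a : ℕ → ℕ) (n v : ℕ) : ℕ :=
  ((Finset.Icc 1 n).filter (fun t => reuseDist a t = (v : ℕ∞))).card

/-- First access time of datum `e`. -/
noncomputable def firstAcc (a : ℕ → ℕ) (n e : ℕ) : ℕ :=
  sInf {t | t ∈ Finset.Icc 1 n ∧ a t = e}

/-- Last access time of datum `e`. -/
noncomputable def lastAcc (a : ℕ → ℕ) (n e : ℕ) : ℕ :=
  sSup {t | t ∈ Finset.Icc 1 n ∧ a t = e}

/-- The sorted list of access times of datum `e` in the trace. -/
def occList (a : ℕ → ℕ) (n e : ℕ) : List ℕ :=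
  ((Finset.Icc 1 n).filter (fun t => a t = e)).sort (· ≤ ·)

/-- Working-set size `ω(t,x)`: distinct data accessed in the window `a(t-x+1), …, a(t)`. -/
def wss (a : ℕ → ℕ) (t x : ℕ) : ℕ := ((Finset.Icc (t - x + 1) t).image a).card

/-- Footprint: the average working-set size over all length-`x` windows. -/
def fp (a : ℕ → ℕ) (n x : ℕ) : ℚ :=
  (∑ t ∈ Finset.Icc x n, (wss a t x : ℚ)) / ((n : ℚ) - (x : ℚ) + 1)

/-- Total working-set size `W(x) = Σ_{t=x}^{n} ω(t,x)`, with `W(0) = 0`. -/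
def totalW (a : ℕ → ℕ) (n x : ℕ) : ℤ :=
  if x = 0 then 0 else ∑ t ∈ Finset.Icc x n, (wss a t x : ℤ)

/-- Steady-state footprint `ss-fp(x) = m - (1/n) Σ_{i=x+1}^{n-1} (i-x)·rt(i)`. -/
def ssfp (a : ℕ → ℕ) (n x : ℕ) : ℚ :=
  ((dataSet a n).card : ℚ)
    - (1 / (n : ℚ)) * ∑ i ∈ Finset.Icc (x + 1) (n - 1), ((i : ℚ) - (x : ℚ)) * (rtHist a n i : ℚ)

-- ================= aux ==================
def nxtSet (a : ℕ → ℕ) (n s : ℕ) : Finset ℕ :=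
  (Finset.Ioc s n).filter (fun u => a u = a s)

lemma mem_nxtSet {a : ℕ → ℕ} {n s u : ℕ} :
    u ∈ nxtSet a n s ↔ (s < u ∧ u ≤ n) ∧ a u = a s := by
  simp [nxtSet, Finset.mem_Ioc]

lemma mem_prevSet {a : ℕ → ℕ} {t u : ℕ} :
    u ∈ prevSet a t ↔ (1 ≤ u ∧ u < t) ∧ a u = a t := by
  simp [prevSet, Finset.mem_Ico]

lemma nxt_spec (a : ℕ → ℕ) (n s : ℕ) (hs1 : 1 ≤ s) (h : (nxtSet a n s).Nonempty) :
    ∃ h' : (prevSet a ((nxtSet a n s).min' h)).Nonempty,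
      (prevSet a ((nxtSet a n s).min' h)).max' h' = s := by
  set t := (nxtSet a n s).min' h with ht
  have htm : t ∈ nxtSet a n s := Finset.min'_mem _ h
  rw [mem_nxtSet] at htm
  have hsp : s ∈ prevSet a t := mem_prevSet.2 ⟨⟨hs1, htm.1.1⟩, htm.2.symm⟩
  have h' : (prevSet a t).Nonempty := ⟨s, hsp⟩
  refine ⟨h', le_antisymm (Finset.max'_le _ _ _ ?_) (Finset.le_max' _ _ hsp)⟩
  intro u hu
  rw [mem_prevSet] at hu
  by_contra hus
  push_neg at hus
  have hmem : u ∈ nxtSet a n s :=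
    mem_nxtSet.2 ⟨⟨hus, le_trans hu.1.2.le htm.1.2⟩, by rw [hu.2, htm.2]⟩
  have := Finset.min'_le _ _ hmem
  omega

lemma prev_spec (a : ℕ → ℕ) (n t : ℕ) (htn : t ≤ n) (h : (prevSet a t).Nonempty) :
    ∃ h' : (nxtSet a n ((prevSet a t).max' h)).Nonempty,
      (nxtSet a n ((prevSet a t).max' h)).min' h' = t := by
  set s := (prevSet a t).max' h with hs
  have hsm : s ∈ prevSet a t := Finset.max'_mem _ h
  rw [mem_prevSet] at hsm
  have htp : t ∈ nxtSet a n s := mem_nxtSet.2 ⟨⟨hsm.1.2, htn⟩, hsm.2.symm⟩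
  have h' : (nxtSet a n s).Nonempty := ⟨t, htp⟩
  refine ⟨h', le_antisymm (Finset.min'_le _ _ htp) (Finset.le_min' _ _ _ ?_)⟩
  intro u hu
  rw [mem_nxtSet] at hu
  by_contra hus
  push_neg at hus
  have hmem : u ∈ prevSet a t :=
    mem_prevSet.2 ⟨⟨le_trans hsm.1.1 hu.1.1.le, hus⟩, by rw [hu.2, hsm.2]⟩
  have := Finset.le_max' _ _ hmem
  omega

lemma reuseTime_of_nonempty {a : ℕ → ℕ} {t : ℕ} (h : (prevSet a t).Nonempty) :
    reuseTime a t = ((t - (prevSet a t).max' h : ℕ) : ℕ∞) := dif_pos h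

lemma reuseTime_of_empty {a : ℕ → ℕ} {t : ℕ} (h : ¬ (prevSet a t).Nonempty) :
    reuseTime a t = ⊤ := dif_neg h

lemma reuseTime_ne_zero (a : ℕ → ℕ) (t : ℕ) : ¬ reuseTime a t ≤ ((0:ℕ) : ℕ∞) := by
  by_cases h : (prevSet a t).Nonempty
  · rw [reuseTime_of_nonempty h]
    have := Finset.max'_mem _ h
    rw [mem_prevSet] at this
    rw [Nat.cast_le]
    omega
  · rw [reuseTime_of_empty h]
    simp

lemma enat_le_succ_iff (v : ℕ∞) (k : ℕ) :
    v ≤ ((k+1 : ℕ) : ℕ∞) ↔ v ≤ (k : ℕ∞) ∨ v = ((k+1 : ℕ) : ℕ∞) := by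
  cases v with
  | top =>
    simp only [top_le_iff]
    constructor
    · intro h
      exact absurd h (by exact_mod_cast ENat.coe_ne_top (k+1))
    · rintro (h | h)
      · exact absurd h (ENat.coe_ne_top k)
      · exact h.symm
  | coe v =>
    rw [Nat.cast_le, Nat.cast_le, Nat.cast_inj]
    omega

lemma sum_rtHist (a : ℕ → ℕ) (n k : ℕ) :
    ∑ i ∈ Finset.Icc 1 k, rtHist a n i
      = ((Finset.Icc 1 n).filter (fun t => reuseTime a t ≤ (k : ℕ∞))).card := by
  induction k with
  | zero =>
    rw [Finset.filter_eq_empty_iff.2 (fun t _ => reuseTime_ne_zero a t)]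
    simp
  | succ k ih =>
    rw [Finset.sum_Icc_succ_top (by omega), ih]
    have hsplit : (Finset.Icc 1 n).filter (fun t => reuseTime a t ≤ ((k+1 : ℕ) : ℕ∞))
        = ((Finset.Icc 1 n).filter (fun t => reuseTime a t ≤ (k : ℕ∞)))
          ∪ ((Finset.Icc 1 n).filter (fun t => reuseTime a t = ((k+1 : ℕ) : ℕ∞))) := by
      rw [← Finset.filter_or]
      exact Finset.filter_congr (fun t _ => by rw [enat_le_succ_iff])
    have hdisj : Disjoint ((Finset.Icc 1 n).filter (fun t => reuseTime a t ≤ (k : ℕ∞)))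
        ((Finset.Icc 1 n).filter (fun t => reuseTime a t = ((k+1 : ℕ) : ℕ∞))) := by
      rw [Finset.disjoint_filter]
      intro t _ hle heq
      rw [heq, Nat.cast_le] at hle
      omega
    rw [hsplit, Finset.card_union_of_disjoint hdisj, rtHist]

/-- Bijection: positions having a next same-datum access within distance `x`
correspond to accesses with reuse time ≤ `x`. -/
lemma card_hasNext_eq (a : ℕ → ℕ) (n x : ℕ) :
    ((Finset.Icc 1 n).filter
        (fun s => a s ∈ (Finset.Ioc s (min (s+x) n)).image a)).card
      = ((Finset.Icc 1 n).filter (fun t => reuseTime a t ≤ (x : ℕ∞))).card := by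
  refine Finset.card_bij'
    (fun s hs => (nxtSet a n s).min' (by
      simp only [Finset.mem_filter, Finset.mem_image] at hs
      obtain ⟨-, u, hu, hau⟩ := hs
      rw [Finset.mem_Ioc] at hu
      exact ⟨u, mem_nxtSet.2 ⟨⟨hu.1, le_trans hu.2 (min_le_right _ _)⟩, hau⟩⟩))
    (fun t ht => (prevSet a t).max' (by
      simp only [Finset.mem_filter] at ht
      by_contra hne
      rw [reuseTime_of_empty hne] at ht
      exact absurd ht.2 (by simp)))
    ?_ ?_ ?_ ?_
  · -- maps into target
    intro s hs
    simp only [Finset.mem_filter, Finset.mem_image, Finset.mem_Icc] at hs ⊢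
    obtain ⟨⟨hs1, hsn⟩, u, hu, hau⟩ := hs
    rw [Finset.mem_Ioc] at hu
    have hne : (nxtSet a n s).Nonempty :=
      ⟨u, mem_nxtSet.2 ⟨⟨hu.1, le_trans hu.2 (min_le_right _ _)⟩, hau⟩⟩
    set t := (nxtSet a n s).min' hne with htdef
    have htm : t ∈ nxtSet a n s := Finset.min'_mem _ hne
    rw [mem_nxtSet] at htm
    obtain ⟨h', hmax⟩ := nxt_spec a n s hs1 hne
    have hle : t ≤ s + x := le_trans (Finset.min'_le _ _
      (mem_nxtSet.2 ⟨⟨hu.1, le_trans hu.2 (min_le_right _ _)⟩, hau⟩))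
      (le_trans hu.2 (min_le_left _ _))
    refine ⟨⟨by omega, htm.1.2⟩, ?_⟩
    rw [reuseTime_of_nonempty h', hmax, Nat.cast_le]
    omega
  · -- inverse maps into source
    intro t ht
    simp only [Finset.mem_filter, Finset.mem_Icc] at ht ⊢
    obtain ⟨⟨ht1, htn⟩, hrt⟩ := ht
    have hne : (prevSet a t).Nonempty := by
      by_contra hne
      rw [reuseTime_of_empty hne] at hrt
      exact absurd hrt (by simp)
    set s := (prevSet a t).max' hne with hsdef
    have hsm : s ∈ prevSet a t := Finset.max'_mem _ hne
    rw [mem_prevSet] at hsm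
    rw [reuseTime_of_nonempty hne, Nat.cast_le] at hrt
    refine ⟨⟨hsm.1.1, by omega⟩, ?_⟩
    rw [Finset.mem_image]
    exact ⟨t, Finset.mem_Ioc.2 ⟨hsm.1.2, le_min (by omega) htn⟩, hsm.2.symm⟩
  · -- left inverse
    intro s hs
    simp only [Finset.mem_filter, Finset.mem_image, Finset.mem_Icc] at hs
    obtain ⟨⟨hs1, hsn⟩, u, hu, hau⟩ := hs
    rw [Finset.mem_Ioc] at hu
    have hne : (nxtSet a n s).Nonempty :=
      ⟨u, mem_nxtSet.2 ⟨⟨hu.1, le_trans hu.2 (min_le_right _ _)⟩, hau⟩⟩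
    obtain ⟨h', hmax⟩ := nxt_spec a n s hs1 hne
    exact hmax
  · -- right inverse
    intro t ht
    simp only [Finset.mem_filter, Finset.mem_Icc] at ht
    obtain ⟨⟨ht1, htn⟩, hrt⟩ := ht
    have hne : (prevSet a t).Nonempty := by
      by_contra hne
      rw [reuseTime_of_empty hne] at hrt
      exact absurd hrt (by simp)
    obtain ⟨h', hmin⟩ := prev_spec a n t htn hne
    exact hmin

/-- Accesses with no previous access (first accesses) biject with the data set. -/
lemma card_firstAccesses (a : ℕ → ℕ) (n : ℕ) :
    ((Finset.Icc 1 n).filter (fun t => ¬ (prevSet a t).Nonempty)).card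
      = (dataSet a n).card := by
  refine Finset.card_bij (fun t _ => a t) ?_ ?_ ?_
  · intro t ht
    simp only [Finset.mem_filter] at ht
    exact Finset.mem_image_of_mem a ht.1
  · intro t1 h1 t2 h2 he
    simp only [Finset.mem_filter, Finset.mem_Icc] at h1 h2
    by_contra hne
    rcases Nat.lt_or_ge t1 t2 with h | h
    · exact h2.2 ⟨t1, mem_prevSet.2 ⟨⟨h1.1.1, h⟩, he⟩⟩
    · have h' : t2 < t1 := by omega
      exact h1.2 ⟨t2, mem_prevSet.2 ⟨⟨h2.1.1, h'⟩, he.symm⟩⟩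
  · intro e he
    rw [dataSet, Finset.mem_image] at he
    obtain ⟨t0, ht0, hat0⟩ := he
    have hFne : ((Finset.Icc 1 n).filter (fun t => a t = e)).Nonempty :=
      ⟨t0, Finset.mem_filter.2 ⟨ht0, hat0⟩⟩
    obtain ⟨htI, hte⟩ := Finset.mem_filter.1 (Finset.min'_mem _ hFne)
    refine ⟨((Finset.Icc 1 n).filter (fun t => a t = e)).min' hFne,
      Finset.mem_filter.2 ⟨htI, ?_⟩, hte⟩
    rintro ⟨u, hu⟩
    rw [mem_prevSet] at hu
    have hu' : u ∈ (Finset.Icc 1 n).filter (fun t => a t = e) := by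
      rw [Finset.mem_filter, Finset.mem_Icc]
      have h2 := Finset.mem_Icc.1 htI
      exact ⟨⟨hu.1.1, by omega⟩, by rw [hu.2, hte]⟩
    have := Finset.min'_le _ _ hu'
    omega

/-- Positions in `(n-x, n]` with no later same-datum access biject with
data whose last access is `≥ n-x+1`. -/
lemma card_lastAccesses (a : ℕ → ℕ) (n x : ℕ) (hx : x ≤ n) :
    ((Finset.Ioc (n-x) n).filter (fun s => ¬ (nxtSet a n s).Nonempty)).card
      = ((dataSet a n).filter (fun e => n - x + 1 ≤ lastAcc a n e)).card := by
  refine Finset.card_bij (fun s _ => a s) ?_ ?_ ?_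
  · intro s hs
    simp only [Finset.mem_filter, Finset.mem_Ioc] at hs
    have hs1 : 1 ≤ s := by omega
    have hmem : s ∈ Finset.Icc 1 n := Finset.mem_Icc.2 ⟨hs1, hs.1.2⟩
    refine Finset.mem_filter.2 ⟨Finset.mem_image_of_mem a hmem, ?_⟩
    show n - x + 1 ≤ lastAcc a n (a s)
    have hbdd : BddAbove {t | t ∈ Finset.Icc 1 n ∧ a t = a s} :=
      ⟨n, fun t ht => (Finset.mem_Icc.1 ht.1).2⟩
    have hle : s ≤ lastAcc a n (a s) := le_csSup hbdd ⟨hmem, rfl⟩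
    omega
  · intro s1 h1 s2 h2 he
    simp only [Finset.mem_filter, Finset.mem_Ioc] at h1 h2
    by_contra hne
    rcases Nat.lt_or_ge s1 s2 with h | h
    · exact h1.2 ⟨s2, mem_nxtSet.2 ⟨⟨h, h2.1.2⟩, he.symm⟩⟩
    · have h' : s2 < s1 := by omega
      exact h2.2 ⟨s1, mem_nxtSet.2 ⟨⟨h', h1.1.2⟩, he⟩⟩
  · intro e he
    simp only [Finset.mem_filter, dataSet, Finset.mem_image] at he
    obtain ⟨⟨t0, ht0, hat0⟩, hlast⟩ := he
    have hSne : {t | t ∈ Finset.Icc 1 n ∧ a t = e}.Nonempty := ⟨t0, ht0, hat0⟩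
    have hbdd : BddAbove {t | t ∈ Finset.Icc 1 n ∧ a t = e} :=
      ⟨n, fun t ht => (Finset.mem_Icc.1 ht.1).2⟩
    have hmem := Nat.sSup_mem hSne hbdd
    have hsd : lastAcc a n e = sSup {t | t ∈ Finset.Icc 1 n ∧ a t = e} := rfl
    rw [hsd] at hlast
    have hsI := Finset.mem_Icc.1 hmem.1
    refine ⟨sSup {t | t ∈ Finset.Icc 1 n ∧ a t = e},
      Finset.mem_filter.2 ⟨Finset.mem_Ioc.2 ⟨by omega, hsI.2⟩, ?_⟩, hmem.2⟩
    rintro ⟨u, hu⟩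
    rw [mem_nxtSet] at hu
    have hu' : u ∈ {t | t ∈ Finset.Icc 1 n ∧ a t = e} :=
      ⟨Finset.mem_Icc.2 ⟨by omega, hu.1.2⟩, by rw [hu.2, hmem.2]⟩
    have := le_csSup hbdd hu'
    omega

/-- Data first accessed by time `x` are exactly the image of `[1,x]`. -/
lemma image_Icc_firstAcc (a : ℕ → ℕ) (n x : ℕ) (hx : x ≤ n) :
    (Finset.Icc 1 x).image a
      = (dataSet a n).filter (fun e => firstAcc a n e ≤ x) := by
  ext e
  simp only [Finset.mem_image, Finset.mem_filter, dataSet, Finset.mem_Icc]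
  constructor
  · rintro ⟨t, ⟨ht1, htx⟩, hat⟩
    have htm : t ∈ Finset.Icc 1 n := Finset.mem_Icc.2 ⟨ht1, by omega⟩
    refine ⟨⟨t, ⟨ht1, by omega⟩, hat⟩, ?_⟩
    calc firstAcc a n e ≤ t := Nat.sInf_le ⟨htm, hat⟩
    _ ≤ x := htx
  · rintro ⟨⟨t0, ht0, hat0⟩, hf⟩
    have hSne : {t | t ∈ Finset.Icc 1 n ∧ a t = e}.Nonempty := ⟨t0, by
      refine ⟨?_, hat0⟩
      simpa using ht0⟩
    have hmem := Nat.sInf_mem hSne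
    have := Finset.mem_Icc.1 hmem.1
    exact ⟨firstAcc a n e, ⟨this.1, hf⟩, hmem.2⟩

lemma Ioc_eq_Icc_succ (s k : ℕ) : Finset.Ioc s k = Finset.Icc (s+1) k := by
  ext u; simp only [Finset.mem_Ioc, Finset.mem_Icc]; omega

lemma wss_succ_eq (a : ℕ → ℕ) (t x : ℕ) (ht : x + 1 ≤ t) :
    (wss a t (x+1) : ℤ)
      = (wss a t x : ℤ)
        + (if a (t - x) ∈ (Finset.Icc (t-x+1) t).image a then 0 else 1) := by
  have h1 : t - (x+1) + 1 = t - x := by omega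
  have h2 : Finset.Icc (t-x) t = insert (t-x) (Finset.Icc (t-x+1) t) := by
    ext u; simp only [Finset.mem_Icc, Finset.mem_insert]; omega
  rw [wss, wss, h1, h2, Finset.image_insert]
  by_cases hmem : a (t-x) ∈ (Finset.Icc (t-x+1) t).image a
  · rw [if_pos hmem, Finset.insert_eq_self.2 hmem]; ring
  · rw [if_neg hmem, Finset.card_insert_of_notMem hmem]; push_cast; ring

lemma totalW_expand (a : ℕ → ℕ) (n x : ℕ) (hx : x ≤ n) :
    totalW a n x = ∑ t ∈ Finset.Icc (x+1) n, (wss a t x : ℤ)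
      + (((Finset.Icc 1 x).image a).card : ℤ) := by
  rcases Nat.eq_zero_or_pos x with h0 | hpos
  · subst h0
    rw [totalW, if_pos rfl]
    have hz : ∀ t ∈ Finset.Icc 1 n, (wss a t 0 : ℤ) = 0 := by
      intro t _
      rw [wss]
      have he : Finset.Icc (t - 0 + 1) t = ∅ := by
        ext u; simp only [Finset.mem_Icc, Finset.notMem_empty, iff_false]; omega
      rw [he]
      simp
    rw [Finset.sum_congr rfl hz, Finset.sum_const_zero]
    simp
  · rw [totalW, if_neg (by omega)]
    have hs : Finset.Icc x n = insert x (Finset.Icc (x+1) n) := by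
      ext u; simp only [Finset.mem_Icc, Finset.mem_insert]; omega
    have hx' : x ∉ Finset.Icc (x+1) n := by simp [Finset.mem_Icc]
    rw [hs, Finset.sum_insert hx']
    have hw : wss a x x = ((Finset.Icc 1 x).image a).card := by
      rw [wss, show x - x + 1 = 1 by omega]
    rw [hw]
    ring

lemma card_cond_reindex (a : ℕ → ℕ) (n x : ℕ) :
    ((Finset.Icc (x+1) n).filter
        (fun t => a (t - x) ∈ (Finset.Icc (t-x+1) t).image a)).card
      = ((Finset.Icc 1 (n-x)).filter
        (fun s => a s ∈ (Finset.Icc (s+1) (s+x)).image a)).card := by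
  refine Finset.card_bij' (fun t _ => t - x) (fun s _ => s + x) ?_ ?_ ?_ ?_
  · intro t ht
    simp only [Finset.mem_filter, Finset.mem_Icc] at ht ⊢
    obtain ⟨⟨h1, h2⟩, hc⟩ := ht
    refine ⟨by omega, ?_⟩
    rw [show t - x + x = t by omega]
    exact hc
  · intro s hs
    simp only [Finset.mem_filter, Finset.mem_Icc] at hs ⊢
    obtain ⟨⟨h1, h2⟩, hc⟩ := hs
    refine ⟨by omega, ?_⟩
    rw [show s + x - x = s by omega]
    exact hc
  · intro t ht
    simp only [Finset.mem_filter, Finset.mem_Icc] at ht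
    show t - x + x = t
    omega
  · intro s _
    show s + x - x = s
    omega

lemma card_split (a : ℕ → ℕ) (n x : ℕ) (hx : x ≤ n) :
    ((Finset.Icc 1 n).filter
        (fun s => a s ∈ (Finset.Ioc s (min (s+x) n)).image a)).card
    = ((Finset.Icc 1 (n-x)).filter
        (fun s => a s ∈ (Finset.Icc (s+1) (s+x)).image a)).card
      + ((Finset.Ioc (n-x) n).filter (fun s => (nxtSet a n s).Nonempty)).card := by
  rw [← Finset.card_filter_add_card_filter_not (fun s => s ≤ n - x)
    (s := (Finset.Icc 1 n).filter
      (fun s => a s ∈ (Finset.Ioc s (min (s+x) n)).image a))]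
  have h1 : ((Finset.Icc 1 n).filter
        (fun s => a s ∈ (Finset.Ioc s (min (s+x) n)).image a)).filter
          (fun s => s ≤ n - x)
      = (Finset.Icc 1 (n-x)).filter
        (fun s => a s ∈ (Finset.Icc (s+1) (s+x)).image a) := by
    ext s
    simp only [Finset.mem_filter, Finset.mem_Icc]
    constructor
    · rintro ⟨⟨⟨hs1, hsn⟩, hc⟩, hle⟩
      have hmin : min (s+x) n = s + x := min_eq_left (by omega)
      rw [hmin, Ioc_eq_Icc_succ] at hc
      exact ⟨⟨hs1, hle⟩, hc⟩
    · rintro ⟨⟨hs1, hle⟩, hc⟩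
      have hmin : min (s+x) n = s + x := min_eq_left (by omega)
      rw [hmin, Ioc_eq_Icc_succ]
      exact ⟨⟨⟨hs1, by omega⟩, hc⟩, hle⟩
  have h2 : ((Finset.Icc 1 n).filter
        (fun s => a s ∈ (Finset.Ioc s (min (s+x) n)).image a)).filter
          (fun s => ¬ s ≤ n - x)
      = (Finset.Ioc (n-x) n).filter (fun s => (nxtSet a n s).Nonempty) := by
    ext s
    simp only [Finset.mem_filter, Finset.mem_Icc, Finset.mem_Ioc, not_le]
    constructor
    · rintro ⟨⟨⟨hs1, hsn⟩, hc⟩, hlt⟩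
      refine ⟨⟨hlt, hsn⟩, ?_⟩
      have hmin : min (s+x) n = n := min_eq_right (by omega)
      rw [hmin] at hc
      obtain ⟨u, hu, hau⟩ := Finset.mem_image.1 hc
      exact ⟨u, mem_nxtSet.2 ⟨Finset.mem_Ioc.1 hu, hau⟩⟩
    · rintro ⟨⟨hlt, hsn⟩, u, hu⟩
      rw [mem_nxtSet] at hu
      refine ⟨⟨⟨by omega, hsn⟩, ?_⟩, hlt⟩
      exact Finset.mem_image.2
        ⟨u, Finset.mem_Ioc.2 ⟨hu.1.1, le_min (by omega) hu.1.2⟩, hu.2⟩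
  rw [h1, h2]


/-- First finite difference of the total working-set size. -/
theorem totalW_first_difference (n m : ℕ) (a : ℕ → ℕ) (hm : (dataSet a n).card = m)
    (x : ℕ) (hx : x + 1 ≤ n) :
    totalW a n (x + 1) - totalW a n x
      = (m : ℤ) + ∑ i ∈ Finset.Icc (x + 1) (n - 1), (rtHist a n i : ℤ)
        - (((dataSet a n).filter (fun e => firstAcc a n e ≤ x)).card : ℤ)
        - (((dataSet a n).filter (fun e => n - x + 1 ≤ lastAcc a n e)).card : ℤ) := by
  have hxn : x ≤ n := by omega
  have hW1 : totalW a n (x+1) = ∑ t ∈ Finset.Icc (x+1) n, (wss a t (x+1) : ℤ) := by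
    rw [totalW, if_neg (by omega)]
  have hW0 := totalW_expand a n x hxn
  rw [image_Icc_firstAcc a n x hxn] at hW0
  have hsum : ∑ t ∈ Finset.Icc (x+1) n, (wss a t (x+1) : ℤ)
      = ∑ t ∈ Finset.Icc (x+1) n, (wss a t x : ℤ)
        + ∑ t ∈ Finset.Icc (x+1) n,
            (if a (t - x) ∈ (Finset.Icc (t-x+1) t).image a then (0:ℤ) else 1) := by
    rw [← Finset.sum_add_distrib]
    exact Finset.sum_congr rfl (fun t ht => wss_succ_eq a t x (Finset.mem_Icc.1 ht).1)
  have hIf : ∑ t ∈ Finset.Icc (x+1) n,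
      (if a (t - x) ∈ (Finset.Icc (t-x+1) t).image a then (0:ℤ) else 1)
      = ((Finset.Icc (x+1) n).card : ℤ)
        - (((Finset.Icc (x+1) n).filter
            (fun t => a (t - x) ∈ (Finset.Icc (t-x+1) t).image a)).card : ℤ) := by
    rw [Finset.sum_ite, Finset.sum_const_zero, Finset.sum_const, zero_add,
      nsmul_eq_mul, mul_one]
    have h := Finset.card_filter_add_card_filter_not
      (s := Finset.Icc (x+1) n)
      (p := fun t => a (t - x) ∈ (Finset.Icc (t-x+1) t).image a)
    omega
  have hcardIcc : (Finset.Icc (x+1) n).card = n - x := by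
    rw [Nat.card_Icc]; omega
  have hreidx := card_cond_reindex a n x
  have hsplit := card_split a n x hxn
  have hbij := card_hasNext_eq a n x
  have hS1 := sum_rtHist a n x
  have hSall := sum_rtHist a n (n-1)
  have hfeq : (Finset.Icc 1 n).filter (fun t => reuseTime a t ≤ ((n-1:ℕ) : ℕ∞))
      = (Finset.Icc 1 n).filter (fun t => (prevSet a t).Nonempty) := by
    apply Finset.filter_congr
    intro t ht
    rw [Finset.mem_Icc] at ht
    by_cases h : (prevSet a t).Nonempty
    · simp only [h, iff_true]
      rw [reuseTime_of_nonempty h, Nat.cast_le]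
      have hmm := Finset.max'_mem _ h
      rw [mem_prevSet] at hmm
      omega
    · simp only [h, iff_false]
      rw [reuseTime_of_empty h]
      simp
  rw [hfeq] at hSall
  have hnm := Finset.card_filter_add_card_filter_not
    (s := Finset.Icc 1 n) (p := fun t => (prevSet a t).Nonempty)
  have hfa := card_firstAccesses a n
  have hIcc1n : (Finset.Icc 1 n).card = n := by rw [Nat.card_Icc]; omega
  have hdecomp : ∑ i ∈ Finset.Icc 1 x, rtHist a n i
      + ∑ i ∈ Finset.Icc (x+1) (n-1), rtHist a n i
      = ∑ i ∈ Finset.Icc 1 (n-1), rtHist a n i := by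
    rw [show Finset.Icc 1 x = Finset.Ioc 0 x from (Ioc_eq_Icc_succ 0 x).symm,
      show Finset.Icc (x+1) (n-1) = Finset.Ioc x (n-1) from (Ioc_eq_Icc_succ x (n-1)).symm,
      show Finset.Icc 1 (n-1) = Finset.Ioc 0 (n-1) from (Ioc_eq_Icc_succ 0 (n-1)).symm]
    exact Finset.sum_Ioc_consecutive _ (by omega) (by omega)
  have hC := card_lastAccesses a n x hxn
  have hCx := Finset.card_filter_add_card_filter_not
    (s := Finset.Ioc (n-x) n) (p := fun s => (nxtSet a n s).Nonempty)
  have hIocx : (Finset.Ioc (n-x) n).card = x := by rw [Nat.card_Ioc]; omega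
  rw [hW1, hW0, hsum, hIf, hcardIcc,
    show ∑ i ∈ Finset.Icc (x + 1) (n - 1), (rtHist a n i : ℤ)
      = ((∑ i ∈ Finset.Icc (x + 1) (n - 1), rtHist a n i : ℕ) : ℤ) by push_cast; rfl]
  omega
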